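/- arXiv:1811.07196 — 2 statements merged into one kernel-verified Lean document; each statement's English description precedes it below -/
import Mathlib

section
/- For the skew shape λ/μ where λ is a partition of n and λ/μ is a horizontal strip, the statistic eig(λ/μ) = C(|λ|+1, 2) − C(|μ|+1, 2) + diag(λ/μ) is a nonnegative integer, where diag(λ/μ) is the sum over cells (i,j) of λ/μ of (j − i). -/
/-- The diagonal index of a set of cells `(i, j)` (0-indexed rows and
columns, so the cell in row `i`, column `j` has diagonal index `j - i`,
agreeing with the 1-indexed convention). -/
def diagS (s : Finset (ℕ × ℕ)) : ℤ := ∑ c ∈ s, ((c.2 : ℤ) - (c.1 : ℤ))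

/-- The skew diagram `λ/μ` is a horizontal strip: no two cells in the same column. -/
def IsHorizontalStrip (l m : YoungDiagram) : Prop :=
  ∀ c1 ∈ l.cells \ m.cells, ∀ c2 ∈ l.cells \ m.cells, c1.2 = c2.2 → c1 = c2

/-- The statistic `eig(λ/μ) = C(|λ|+1,2) − C(|μ|+1,2) + diag(λ/μ)`. -/
def eigS (l m : YoungDiagram) : ℤ :=
  ((l.card + 1).choose 2 : ℤ) - ((m.card + 1).choose 2 : ℤ) + diagS (l.cells \ m.cells)

/-- The one-row Young diagram with `n` boxes. -/
def rowDiagram (n : ℕ) : YoungDiagram :=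
  YoungDiagram.ofRowLens [n] (List.sortedGE_iff_pairwise.2 (List.pairwise_singleton _ n))

/-- The one-column Young diagram `1^n`. -/
def colDiagram (n : ℕ) : YoungDiagram :=
  YoungDiagram.ofRowLens (List.replicate n 1) (by
    induction n with
    | zero => exact List.sortedGE_iff_pairwise.2 List.Pairwise.nil
    | succ k ih =>
      rw [List.replicate_succ, List.sortedGE_iff_pairwise, List.pairwise_cons]
      exact ⟨fun b hb => by simp [List.eq_of_mem_replicate hb], ih.pairwise⟩)

/-!
Write `s = |λ/μ|`, so `|λ| = |μ| + s`. In a horizontal strip every cell `(i, j)` has the `i`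
cells above it in `μ`, hence `i ≤ |μ|` and `diag(λ/μ) ≥ -s|μ|`. On the other hand
`C(|μ|+s+1, 2) - C(|μ|+1, 2) = s|μ| + C(s+1, 2)`, so `eig(λ/μ) ≥ C(s+1, 2) ≥ 0`.
-/

theorem Nat.add_add_one_choose_two (a b : ℕ) :
    (a + b + 1).choose 2 = (a + 1).choose 2 + b * a + (b + 1).choose 2 := by
  qify
  simp only [Nat.cast_choose_two]
  push_cast
  ring

theorem IsHorizontalStrip.fst_le_card {l m : YoungDiagram} (hs : IsHorizontalStrip l m)
    {c : ℕ × ℕ} (hc : c ∈ l.cells \ m.cells) : c.1 ≤ m.card := by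
  have hcl : c ∈ l := (YoungDiagram.mem_cells _).mp (Finset.mem_sdiff.mp hc).1
  have habove : (Finset.range c.1).image (fun i => (i, c.2)) ⊆ m.cells := by
    intro x hx
    obtain ⟨i, hi, rfl⟩ := Finset.mem_image.mp hx
    have hi : i < c.1 := Finset.mem_range.mp hi
    by_contra hxm
    have hxl : (i, c.2) ∈ l.cells :=
      (YoungDiagram.mem_cells _).mpr (l.up_left_mem hi.le le_rfl hcl)
    exact hi.ne (congrArg Prod.fst (hs _ (Finset.mem_sdiff.mpr ⟨hxl, hxm⟩) c hc rfl))
  calc c.1 = ((Finset.range c.1).image (fun i => (i, c.2))).card := by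
        rw [Finset.card_image_of_injective _ fun a b hab => (Prod.mk.inj hab).1, Finset.card_range]
    _ ≤ m.card := Finset.card_le_card habove

theorem neg_card_mul_le_diagS {s : Finset (ℕ × ℕ)} {M : ℕ} (h : ∀ c ∈ s, c.1 ≤ M) :
    -((s.card : ℤ) * M) ≤ diagS s := by
  have hc : ∀ c ∈ s, -(M : ℤ) ≤ (c.2 : ℤ) - c.1 := fun c hc => by
    have hcM := h c hc
    omega
  simpa [diagS] using Finset.card_nsmul_le_sum s _ _ hc

theorem eig_nonneg_general (l m : YoungDiagram) (hml : m ≤ l)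
    (hs : IsHorizontalStrip l m) : 0 ≤ eigS l m := by
  set s := (l.cells \ m.cells).card
  have hcard : l.card = m.card + s :=
    (Finset.card_sdiff_add_card_eq_card (YoungDiagram.cells_subset_iff.mpr hml)).symm.trans
      (Nat.add_comm _ _)
  have hdiag : -((s : ℤ) * m.card) ≤ diagS (l.cells \ m.cells) :=
    neg_card_mul_le_diagS fun c hc => hs.fst_le_card hc
  rw [eigS, hcard, Nat.add_add_one_choose_two]
  push_cast
  have hchoose : (0 : ℤ) ≤ ((s + 1).choose 2 : ℕ) := Int.natCast_nonneg _
  linarith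

/-- For a horizontal strip `λ/μ` with `λ` a partition of `n`, the statistic
`eig(λ/μ)` is a nonnegative integer. -/
theorem eig_nonneg (n : ℕ) (l m : YoungDiagram) (hml : m ≤ l) (hn : l.card = n)
    (hs : IsHorizontalStrip l m) : 0 ≤ eigS l m :=
  eig_nonneg_general l m hml hs
end

section
/- For every standard tableau t of type at least k ≥ 1, the eigenvalue v_k(t) defined recursively by v_0(t) = 1, v_k(t) = 0 if type(t) < k, and v_k(t) = v_k(Δ(t)) + (n + 1 − k + diag(t/Δ(t)))·v_{k−1}(Δ(t)) for t of size n and type ≥ k, is a positive integer. -/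
/-!
Unfolding the recursion, `v_{k+1}(t) = v_{k+1}(Δt) + (n - k + c - r) v_k(Δt)`, where `(r, c)` is
the box `t/Δt`, so by induction on `n` everything reduces to the positivity of the coefficient.
As `r` is less than the number `ℓ` of rows and `k + 1 ≤ type(t)`, it suffices that
`type(t) ≤ n - ℓ + 1`. This follows by induction along `Δ`, because the number of rows can drop
only at the last step before a desarrangement tableau: if the jeu-de-taquin hole exits in the
first column, the entries `1, …, a` up to the first ascent `a` of `t` (odd, as `t` is not a
desarrangement tableau) fill the top of the first column, the slide shifts them up, and `Δt` has
the even first ascent `a - 1`.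
-/

namespace RSW

/-- A tableau given by its list of rows. -/
abbrev Tab := List (List ℕ)

/-- Number of cells. -/
def sizeT (t : Tab) : ℕ := (t.map List.length).sum

/-- Shape of a tableau: list of row lengths. -/
def shapeT (t : Tab) : List ℕ := t.map List.length

/-- Standard Young tableau predicate for the list-of-rows model. -/
def IsSYT (t : Tab) : Prop :=
  (∀ r ∈ t, r ≠ []) ∧
  (t.map List.length).Pairwise (· ≥ ·) ∧
  (∀ r ∈ t, r.Pairwise (· < ·)) ∧
  (∀ i j, i + 1 < t.length → j < (t.getD (i+1) []).length →
      (t.getD i []).getD j 0 < (t.getD (i+1) []).getD j 0) ∧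
  t.flatten.Perm (List.range' 1 (sizeT t))

def getE (t : Tab) (i j : ℕ) : Option ℕ := (t[i]?).bind (fun r => r[j]?)

def setE (t : Tab) (i j v : ℕ) : Tab := t.set i ((t.getD i []).set j v)

/-- Jeu-de-taquin slide of the hole at `(i,j)` towards an outer corner. -/
def slide : ℕ → Tab → ℕ → ℕ → Tab × ℕ × ℕ
  | 0, t, i, j => (t, i, j)
  | fuel+1, t, i, j =>
    match getE t i (j+1), getE t (i+1) j with
    | none, none => (t, i, j)
    | some r, none => slide fuel (setE t i j r) i (j+1)
    | none, some d => slide fuel (setE t i j d) (i+1) j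
    | some r, some d =>
      if r < d then slide fuel (setE t i j r) i (j+1)
      else slide fuel (setE t i j d) (i+1) j

/-- Schützenberger's Δ operator: remove the entry 1, slide the hole to an
outer corner by jeu de taquin, remove it, and decrease all entries by 1. -/
def delta (t : Tab) : Tab :=
  let s := slide (sizeT t) t 0 0
  let t' := s.1.set s.2.1 ((s.1.getD s.2.1 []).take s.2.2)
  (t'.filter (fun r => !r.isEmpty)).map (fun r => r.map (fun v => v - 1))

/-- Index of the row containing the entry `v`. -/
def rowOf (t : Tab) (v : ℕ) : ℕ := t.findIdx (fun r => decide (v ∈ r))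

/-- The smallest ascent of a standard tableau: the least `i` such that
`i = n` or `i+1` lies in a row weakly above the row of `i`. -/
def firstAscent (t : Tab) : Option ℕ :=
  ((List.range (sizeT t)).map (· + 1)).find?
    (fun i => decide (i = sizeT t ∨ rowOf t (i+1) ≤ rowOf t i))

/-- A standard tableau is a desarrangement tableau if it is empty or its
smallest ascent is even. -/
def IsDes (t : Tab) : Prop :=
  t = [] ∨ ∃ k, firstAscent t = some k ∧ Even k

/-- The type of a standard tableau: the least `j` with `Δ^j t` a
desarrangement tableau. -/
noncomputable def typeT (t : Tab) : ℕ := sInf {j | IsDes (delta^[j] t)}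

/-- The diagonal index of (the shape of) a tableau. -/
def diagT (t : Tab) : ℤ :=
  ((List.range t.length).map (fun i =>
    ((List.range (t.getD i []).length).map (fun j => (j : ℤ) - i)).sum)).sum

/-- The diagonal index of the box `t/Δ(t)`. -/
def diagBox (t : Tab) : ℤ := diagT t - diagT (delta t)

open Classical in
noncomputable def vAux : ℕ → ℕ → Tab → ℤ
  | _, 0, _ => 1
  | 0, _+1, _ => 0
  | fuel+1, k+1, t =>
    if typeT t < k+1 then 0
    else vAux fuel (k+1) (delta t) +
      ((sizeT t : ℤ) + 1 - (k+1) + diagBox t) * vAux fuel k (delta t)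

/-- The eigenvalue `v_k(t)` of `ν_k` indexed by the standard tableau `t`. -/
noncomputable def v (k : ℕ) (t : Tab) : ℤ := vAux (sizeT t) k t

/-- Cells of (the shape of) a tableau, 0-indexed. -/
def cellsT (t : Tab) : Finset (ℕ × ℕ) :=
  (Finset.range t.length).biUnion
    (fun i => (Finset.range (t.getD i []).length).image (fun j => (i, j)))

end RSW

namespace RSW

def rowLen (t : Tab) (i : ℕ) : ℕ := (t.getD i []).length

@[simp] theorem rowLen_nil (i : ℕ) : rowLen [] i = 0 := rfl

@[simp] theorem rowLen_cons_zero (row : List ℕ) (t : Tab) : rowLen (row :: t) 0 = row.length :=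
  rfl

@[simp] theorem rowLen_cons_succ (row : List ℕ) (t : Tab) (i : ℕ) :
    rowLen (row :: t) (i + 1) = rowLen t i :=
  rfl

@[simp] theorem getE_cons_zero (row : List ℕ) (t : Tab) (j : ℕ) :
    getE (row :: t) 0 j = row[j]? :=
  rfl

@[simp] theorem getE_cons_succ (row : List ℕ) (t : Tab) (i j : ℕ) :
    getE (row :: t) (i + 1) j = getE t i j :=
  rfl

@[simp] theorem sizeT_cons (row : List ℕ) (t : Tab) : sizeT (row :: t) = row.length + sizeT t := by
  simp [sizeT]

theorem rowLen_of_lt {t : Tab} {i : ℕ} (h : i < t.length) : rowLen t i = t[i].length := by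
  simp [rowLen, List.getD_eq_getElem?_getD, h]

theorem rowLen_of_le {t : Tab} {i : ℕ} (h : t.length ≤ i) : rowLen t i = 0 := by
  simp [rowLen, List.getD_eq_getElem?_getD, h]

theorem rowLen_eq_getD (t : Tab) (i : ℕ) : rowLen t i = (t[i]?.getD []).length := by
  rw [rowLen, List.getD_eq_getElem?_getD]

theorem getE_isSome_iff {t : Tab} {i j : ℕ} : (getE t i j).isSome ↔ j < rowLen t i := by
  rcases lt_or_ge i t.length with h | h
  · simp [getE, rowLen_of_lt h, h]
  · simp [getE, rowLen_of_le h, h]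

theorem getE_eq_none_iff {t : Tab} {i j : ℕ} : getE t i j = none ↔ rowLen t i ≤ j := by
  rw [← Option.not_isSome_iff_eq_none, getE_isSome_iff, not_lt]

theorem exists_getE_eq_some {t : Tab} {i j : ℕ} (h : j < rowLen t i) :
    ∃ v, getE t i j = some v :=
  Option.isSome_iff_exists.1 (getE_isSome_iff.2 h)

theorem lt_rowLen_of_getE_eq_some {t : Tab} {i j v : ℕ} (h : getE t i j = some v) :
    j < rowLen t i :=
  getE_isSome_iff.1 (by simp [h])

theorem lt_length_of_getE_eq_some {t : Tab} {i j v : ℕ} (h : getE t i j = some v) :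
    i < t.length := by
  by_contra hi
  have := lt_rowLen_of_getE_eq_some h
  rw [rowLen_of_le (by omega)] at this
  omega

theorem getE_eq_getElem {t : Tab} {i j : ℕ} (hi : i < t.length) (hj : j < t[i].length) :
    getE t i j = some t[i][j] := by
  simp [getE, hi, hj]

theorem getD_getD_eq_of_getE_eq_some {t : Tab} {i j v : ℕ} (h : getE t i j = some v) :
    (t.getD i []).getD j 0 = v := by
  have hi := lt_length_of_getE_eq_some h
  simp only [getE, List.getElem?_eq_getElem hi, Option.bind_some] at h
  simp [List.getD_eq_getElem?_getD, hi, h]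

theorem getE_setE_self {t : Tab} {i j v : ℕ} (h : j < rowLen t i) :
    getE (setE t i j v) i j = some v := by
  have hi : i < t.length := by
    by_contra hi
    rw [rowLen_of_le (by omega)] at h
    omega
  rw [rowLen_of_lt hi] at h
  simp [setE, getE, hi, h, List.getD_eq_getElem?_getD]

theorem getE_setE_of_ne {t : Tab} {i j v p q : ℕ} (h : ¬(p = i ∧ q = j)) :
    getE (setE t i j v) p q = getE t p q := by
  unfold setE getE
  rcases eq_or_ne p i with rfl | hp
  · rcases lt_or_ge p t.length with hi | hi
    · simp [hi, List.getD_eq_getElem?_getD, Ne.symm (show q ≠ j by tauto)]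
    · rw [List.set_eq_of_length_le hi]
  · rw [List.getElem?_set_ne (Ne.symm hp)]

theorem getE_setE {t : Tab} {i j v : ℕ} (h : j < rowLen t i) (p q : ℕ) :
    getE (setE t i j v) p q = if p = i ∧ q = j then some v else getE t p q := by
  split_ifs with hpq
  · rw [hpq.1, hpq.2, getE_setE_self h]
  · exact getE_setE_of_ne hpq

theorem shapeT_setE (t : Tab) (i j v : ℕ) : shapeT (setE t i j v) = shapeT t := by
  unfold shapeT setE
  rw [List.map_set]
  rcases lt_or_ge i t.length with h | h
  · refine List.ext_getElem (by simp) fun n _ _ => ?_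
    rcases eq_or_ne n i with rfl | hne
    · simp [List.getD_eq_getElem?_getD, h]
    · simp [hne.symm]
  · exact List.set_eq_of_length_le (by simpa using h)

section Shape

variable {t s : Tab}

theorem sizeT_eq_length_flatten (t : Tab) : sizeT t = t.flatten.length := by
  simp [sizeT, List.length_flatten]

theorem rowLen_eq_getD_shapeT (t : Tab) (i : ℕ) : rowLen t i = (shapeT t).getD i 0 := by
  rcases lt_or_ge i t.length with h | h
  · simp [rowLen_of_lt h, shapeT, List.getD_eq_getElem?_getD, h]
  · simp [rowLen_of_le h, shapeT, List.getD_eq_getElem?_getD, h]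

theorem sizeT_congr (h : shapeT t = shapeT s) : sizeT t = sizeT s :=
  congrArg List.sum h

theorem rowLen_congr (h : shapeT t = shapeT s) (i : ℕ) : rowLen t i = rowLen s i := by
  rw [rowLen_eq_getD_shapeT, rowLen_eq_getD_shapeT, h]

theorem diagT_eq_sum {N : ℕ} (hN : t.length ≤ N) :
    diagT t = ∑ i ∈ Finset.range N, ∑ j ∈ Finset.range (rowLen t i), ((j : ℤ) - i) := by
  rw [← Finset.sum_range_add_sum_Ico _ hN, Finset.sum_eq_zero (s := Finset.Ico _ _), add_zero]
  · simp [diagT, rowLen, Finset.sum_eq_multiset_sum, Multiset.range, ← List.map_eq_flatMap,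
      Function.comp_def]
  · intro i hi
    simp [rowLen_of_le (Finset.mem_Ico.1 hi).1]

end Shape

structure IsYoungShape (t : Tab) : Prop where
  ne_nil : ∀ row ∈ t, row ≠ []
  antitone : (t.map List.length).Pairwise (· ≥ ·)

namespace IsYoungShape

variable {t s : Tab}

theorem of_cons {row : List ℕ} (S : IsYoungShape (row :: t)) : IsYoungShape t :=
  ⟨fun r hr => S.ne_nil r (List.mem_cons_of_mem _ hr), (List.pairwise_cons.1 S.antitone).2⟩

theorem of_shapeT_eq (S : IsYoungShape t) (h : shapeT t = shapeT s) : IsYoungShape s := by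
  have hlen : s.map List.length = t.map List.length := h.symm
  refine ⟨fun row hrow hnil => ?_, hlen ▸ S.antitone⟩
  obtain ⟨row', hrow', hlen⟩ : ∃ row' ∈ t, row'.length = row.length :=
    List.mem_map.1 (show row.length ∈ shapeT t from h ▸ List.mem_map_of_mem hrow)
  exact S.ne_nil row' hrow' (List.length_eq_zero_iff.1 (by simp [hlen, hnil]))

theorem rowLen_anti (S : IsYoungShape t) {p p' : ℕ} (h : p ≤ p') : rowLen t p' ≤ rowLen t p := by
  rcases h.eq_or_lt with rfl | hlt
  · exact le_rfl
  rcases lt_or_ge p' t.length with h' | h'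
  · have := List.pairwise_iff_getElem.1 S.antitone p p' (by simp; omega) (by simpa using h') hlt
    simpa [rowLen_of_lt h', rowLen_of_lt (hlt.trans h')] using this
  · simp [rowLen_of_le h']

theorem rowLen_pos_iff (S : IsYoungShape t) {p : ℕ} : 0 < rowLen t p ↔ p < t.length := by
  refine ⟨fun h => ?_, fun h => ?_⟩
  · by_contra hp
    rw [rowLen_of_le (by omega)] at h
    omega
  · rw [rowLen_of_lt h]
    exact List.length_pos_iff.2 (S.ne_nil _ (List.getElem_mem h))

theorem of_rowLen_anti (hne : ∀ row ∈ t, row ≠ [])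
    (hanti : ∀ p p', p ≤ p' → rowLen t p' ≤ rowLen t p) : IsYoungShape t := by
  refine ⟨hne, List.pairwise_iff_getElem.2 fun p p' hp hp' hlt => ?_⟩
  simp only [List.length_map] at hp hp'
  simpa [rowLen_of_lt hp, rowLen_of_lt hp'] using hanti p p' hlt.le

theorem length_eq (S : IsYoungShape t) (S' : IsYoungShape s)
    (h : ∀ p, 0 < rowLen t p ↔ 0 < rowLen s p) : t.length = s.length := by
  have h1 := h t.length
  have h2 := h s.length
  rw [S.rowLen_pos_iff, S'.rowLen_pos_iff] at h1 h2
  exact le_antisymm (not_lt.1 fun hlt => lt_irrefl _ (h2.1 hlt))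
    (not_lt.1 fun hlt => lt_irrefl _ (h1.2 hlt))

theorem add_lt_sizeT (S : IsYoungShape t) {i j : ℕ} (h : j < rowLen t i) : i + j < sizeT t := by
  induction t generalizing i with
  | nil => simp at h
  | cons row t ih =>
    have hrow : 0 < row.length := List.length_pos_iff.2 (S.ne_nil row (by simp))
    cases i with
    | zero =>
      rw [rowLen_cons_zero] at h
      rw [sizeT_cons]
      omega
    | succ i =>
      have := ih S.of_cons (i := i) (by simpa using h)
      rw [sizeT_cons]
      omega

theorem length_le_sizeT (S : IsYoungShape t) : t.length ≤ sizeT t := by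
  rcases Nat.eq_zero_or_pos t.length with h | h
  · omega
  · have := S.add_lt_sizeT (i := t.length - 1) (j := 0) (S.rowLen_pos_iff.2 (by omega))
    omega

end IsYoungShape

theorem getE_eq_getElem?_flatten (t : Tab) {i j : ℕ} (h : j < rowLen t i) :
    getE t i j = t.flatten[sizeT (t.take i) + j]? := by
  induction t generalizing i with
  | nil => simp at h
  | cons row t ih =>
    cases i with
    | zero => simp_all [List.getElem?_append_left, sizeT]
    | succ i =>
      rw [getE_cons_succ, ih (by simpa using h), List.take_succ_cons, sizeT_cons, List.flatten_cons,
        Nat.add_assoc, List.getElem?_append_right (by omega), Nat.add_sub_cancel_left]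

theorem flatten_setE (t : Tab) {i j : ℕ} (v : ℕ) (h : j < rowLen t i) :
    (setE t i j v).flatten = t.flatten.set (sizeT (t.take i) + j) v := by
  induction t generalizing i with
  | nil => simp at h
  | cons row t ih =>
    cases i with
    | zero => simp_all [setE, List.set_append_left, sizeT]
    | succ i =>
      have := ih (i := i) (by simpa using h)
      simp only [setE] at this
      simp only [setE, List.getD_cons_succ, List.set_cons_succ, List.flatten_cons, this,
        List.take_succ_cons, sizeT_cons, Nat.add_assoc]
      rw [List.set_append_right _ _ (by omega), Nat.add_sub_cancel_left]

theorem mem_flatten_of_getE_eq_some {t : Tab} {p q v : ℕ} (h : getE t p q = some v) :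
    v ∈ t.flatten := by
  rw [getE_eq_getElem?_flatten t (lt_rowLen_of_getE_eq_some h)] at h
  exact List.mem_of_getElem? h

theorem exists_getE_eq_some_of_mem_flatten {t : Tab} {v : ℕ} (h : v ∈ t.flatten) :
    ∃ p q, getE t p q = some v := by
  obtain ⟨row, hrow, hv⟩ := List.mem_flatten.1 h
  obtain ⟨p, hp, rfl⟩ := List.mem_iff_getElem.1 hrow
  obtain ⟨q, hq, rfl⟩ := List.mem_iff_getElem.1 hv
  exact ⟨p, q, getE_eq_getElem hp hq⟩

theorem perm_eraseIdx_of_perm_cons {l L : List ℕ} {n h : ℕ} (hn : l[n]? = some h)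
    (hl : l.Perm (h :: L)) : (l.eraseIdx n).Perm L := by
  obtain ⟨hlt, rfl⟩ := List.getElem?_eq_some_iff.1 hn
  exact ((List.getElem_cons_eraseIdx_perm hlt).trans hl).cons_inv

theorem perm_set_of_perm_cons {l L : List ℕ} {n h : ℕ} (x : ℕ) (hn : l[n]? = some h)
    (hl : l.Perm (h :: L)) : (l.set n x).Perm (x :: L) :=
  (List.set_perm_cons_eraseIdx (List.getElem?_eq_some_iff.1 hn).1 x).trans
    ((perm_eraseIdx_of_perm_cons hn hl).cons x)

theorem rowLen_setE (t : Tab) (i j v p : ℕ) : rowLen (setE t i j v) p = rowLen t p :=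
  rowLen_congr (shapeT_setE t i j v) p

/-- During the slide the hole carries a stale copy of a neighbouring entry; `L` lists the
entries off the hole. -/
structure HoleEntries (L : List ℕ) (t : Tab) (i j : ℕ) : Prop where
  hole : j < rowLen t i
  inj : ∀ p q p' q' v, getE t p q = some v → getE t p' q' = some v →
    ¬(p = i ∧ q = j) → ¬(p' = i ∧ q' = j) → p = p' ∧ q = q'
  one_le : ∀ p q v, getE t p q = some v → 1 ≤ v
  perm : ∃ h, getE t i j = some h ∧ t.flatten.Perm (h :: L)

structure SlideOrder (t : Tab) (i j : ℕ) : Prop where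
  row : ∀ p q v w, getE t p q = some v → getE t p (q + 1) = some w →
    ¬(p = i ∧ q = j) → ¬(p = i ∧ q + 1 = j) → v < w
  col : ∀ p q v w, getE t p q = some v → getE t (p + 1) q = some w →
    ¬(p = i ∧ q = j) → ¬(p + 1 = i ∧ q = j) → v < w
  nbr : ∀ p q v, getE t p q = some v → ((p = i ∧ q + 1 = j) ∨ (p + 1 = i ∧ q = j)) →
    (∀ w, getE t i (j + 1) = some w → v < w) ∧ (∀ w, getE t (i + 1) j = some w → v < w)

theorem HoleEntries.move {L : List ℕ} {t : Tab} {i j p q x : ℕ} (E : HoleEntries L t i j)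
    (hx : getE t p q = some x) (hpq : ¬(p = i ∧ q = j)) :
    HoleEntries L (setE t i j x) p q := by
  have hget := getE_setE (v := x) E.hole
  refine ⟨by rw [rowLen_setE]; exact lt_rowLen_of_getE_eq_some hx, ?_, ?_, ?_⟩
  · intro a b a' b' v hv hv' hab hab'
    rw [hget] at hv hv'
    by_cases c : a = i ∧ b = j <;> by_cases c' : a' = i ∧ b' = j
    · exact ⟨c.1.trans c'.1.symm, c.2.trans c'.2.symm⟩
    · rw [if_pos c] at hv; rw [if_neg c'] at hv'
      cases hv
      have := E.inj _ _ _ _ _ hx hv' hpq c'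
      exact absurd ⟨this.1.symm, this.2.symm⟩ hab'
    · rw [if_neg c] at hv; rw [if_pos c'] at hv'
      cases hv'
      have := E.inj _ _ _ _ _ hx hv hpq c
      exact absurd ⟨this.1.symm, this.2.symm⟩ hab
    · rw [if_neg c] at hv; rw [if_neg c'] at hv'
      exact E.inj _ _ _ _ _ hv hv' c c'
  · intro a b v hv
    rw [hget] at hv
    split_ifs at hv
    · cases hv; exact E.one_le _ _ _ hx
    · exact E.one_le _ _ _ hv
  · obtain ⟨h, hh, hperm⟩ := E.perm
    refine ⟨x, by rw [hget, if_neg hpq, hx], ?_⟩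
    rw [flatten_setE t x E.hole]
    rw [getE_eq_getElem?_flatten t E.hole] at hh
    exact perm_set_of_perm_cons x hh hperm

theorem SlideOrder.move_right {t : Tab} {i j r : ℕ} (O : SlideOrder t i j) (hole : j < rowLen t i)
    (hr : getE t i (j + 1) = some r) (hd : ∀ d, getE t (i + 1) j = some d → r < d) :
    SlideOrder (setE t i j r) i (j + 1) := by
  have hget := getE_setE (v := r) hole
  have hright : ∀ w, getE (setE t i j r) i (j + 1 + 1) = some w → r < w := fun w hw => by
    rw [hget, if_neg (by omega)] at hw
    exact O.row _ _ _ _ hr hw (by omega) (by omega)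
  have hbelow : ∀ w, getE (setE t i j r) (i + 1) (j + 1) = some w → r < w := fun w hw => by
    rw [hget, if_neg (by omega)] at hw
    exact O.col _ _ _ _ hr hw (by omega) (by omega)
  refine ⟨?_, ?_, ?_⟩
  · intro p q v w hv hw h1 h2
    rw [hget, if_neg (by omega)] at hv
    rw [hget] at hw
    by_cases c : p = i ∧ q + 1 = j
    · rw [if_pos c] at hw
      cases hw
      exact (O.nbr _ _ _ hv (Or.inl c)).1 _ hr
    · rw [if_neg c] at hw
      exact O.row _ _ _ _ hv hw (by omega) c
  · intro p q v w hv hw h1 h2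
    rw [hget] at hv hw
    by_cases c1 : p = i ∧ q = j
    · rw [if_pos c1] at hv; rw [if_neg (by omega), c1.1, c1.2] at hw
      cases hv
      exact hd _ hw
    rw [if_neg c1] at hv
    by_cases c2 : p + 1 = i ∧ q = j
    · rw [if_pos c2] at hw
      cases hw
      exact (O.nbr _ _ _ hv (Or.inr c2)).1 _ hr
    · rw [if_neg c2] at hw
      exact O.col _ _ _ _ hv hw c1 c2
  · rintro p q v hv (⟨rfl, hq⟩ | ⟨hp, rfl⟩)
    · rw [hget, if_pos ⟨rfl, by omega⟩] at hv
      cases hv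
      exact ⟨hright, hbelow⟩
    · rw [hget, if_neg (by omega)] at hv
      have hvr : v < r := O.col _ _ _ _ hv (by rw [hp]; exact hr) (by omega) (by omega)
      exact ⟨fun w hw => hvr.trans (hright w hw), fun w hw => hvr.trans (hbelow w hw)⟩

theorem SlideOrder.move_down {t : Tab} {i j d : ℕ} (O : SlideOrder t i j) (hole : j < rowLen t i)
    (hd : getE t (i + 1) j = some d) (hr : ∀ r, getE t i (j + 1) = some r → d < r) :
    SlideOrder (setE t i j d) (i + 1) j := by
  have hget := getE_setE (v := d) hole
  have hright : ∀ w, getE (setE t i j d) (i + 1) (j + 1) = some w → d < w := fun w hw => by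
    rw [hget, if_neg (by omega)] at hw
    exact O.row _ _ _ _ hd hw (by omega) (by omega)
  have hbelow : ∀ w, getE (setE t i j d) (i + 1 + 1) j = some w → d < w := fun w hw => by
    rw [hget, if_neg (by omega)] at hw
    exact O.col _ _ _ _ hd hw (by omega) (by omega)
  refine ⟨?_, ?_, ?_⟩
  · intro p q v w hv hw h1 h2
    rw [hget] at hv hw
    by_cases c1 : p = i ∧ q = j
    · rw [if_pos c1] at hv; rw [if_neg (by omega), c1.1, c1.2] at hw
      cases hv
      exact hr _ hw
    rw [if_neg c1] at hv
    by_cases c2 : p = i ∧ q + 1 = j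
    · rw [if_pos c2] at hw
      cases hw
      exact (O.nbr _ _ _ hv (Or.inl c2)).2 _ hd
    · rw [if_neg c2] at hw
      exact O.row _ _ _ _ hv hw c1 c2
  · intro p q v w hv hw h1 h2
    rw [hget, if_neg (by omega)] at hv
    rw [hget] at hw
    by_cases c : p + 1 = i ∧ q = j
    · rw [if_pos c] at hw
      cases hw
      exact (O.nbr _ _ _ hv (Or.inr c)).2 _ hd
    · rw [if_neg c] at hw
      exact O.col _ _ _ _ hv hw (by omega) c
  · rintro p q v hv (⟨rfl, hq⟩ | ⟨hp, rfl⟩)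
    · rw [hget, if_neg (by omega)] at hv
      have hvd : v < d := O.row _ _ _ _ hv (by rw [hq]; exact hd) (by omega) (by omega)
      exact ⟨fun w hw => hvd.trans (hright w hw), fun w hw => hvd.trans (hbelow w hw)⟩
    · rw [hget, if_pos ⟨by omega, rfl⟩] at hv
      cases hv
      exact ⟨hright, hbelow⟩

theorem slide_succ_cases (fuel : ℕ) (t : Tab) (i j : ℕ) :
    (getE t i (j + 1) = none ∧ getE t (i + 1) j = none ∧ slide (fuel + 1) t i j = (t, i, j)) ∨
    (∃ r, getE t i (j + 1) = some r ∧ (∀ d, getE t (i + 1) j = some d → r < d) ∧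
      slide (fuel + 1) t i j = slide fuel (setE t i j r) i (j + 1)) ∨
    (∃ d, getE t (i + 1) j = some d ∧ (∀ r, getE t i (j + 1) = some r → ¬r < d) ∧
      slide (fuel + 1) t i j = slide fuel (setE t i j d) (i + 1) j) := by
  rcases hR : getE t i (j + 1) with _ | r <;> rcases hD : getE t (i + 1) j with _ | d
  · simp [slide, hR, hD]
  · simp [slide, hR, hD]
  · simp [slide, hR, hD]
  · by_cases hc : r < d
    · simp [slide, hR, hD, hc]
    · simp [slide, hR, hD, hc, Nat.le_of_not_lt hc]

theorem le_slide_snd_snd (fuel : ℕ) (t : Tab) (i j : ℕ) : j ≤ (slide fuel t i j).2.2 := by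
  induction fuel generalizing t i j with
  | zero => exact le_rfl
  | succ fuel ih =>
    rcases slide_succ_cases fuel t i j with ⟨-, -, hs⟩ | ⟨r, -, -, hs⟩ | ⟨d, -, -, hs⟩ <;> rw [hs]
    · exact (Nat.le_succ j).trans (ih _ _ _)
    · exact ih _ _ _

theorem slide_spec {L : List ℕ} (fuel : ℕ) {t t' : Tab} {i j i' j' : ℕ}
    (S : IsYoungShape t) (E : HoleEntries L t i j) (O : SlideOrder t i j)
    (hfuel : sizeT t ≤ fuel + i + j) (hs : slide fuel t i j = (t', i', j')) :
    shapeT t' = shapeT t ∧ HoleEntries L t' i' j' ∧ SlideOrder t' i' j' ∧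
      getE t' i' (j' + 1) = none ∧ getE t' (i' + 1) j' = none := by
  induction fuel generalizing t i j with
  | zero => have := S.add_lt_sizeT E.hole; omega
  | succ fuel ih =>
    rcases slide_succ_cases fuel t i j with ⟨hR, hD, hs'⟩ | ⟨r, hR, hd, hs'⟩ | ⟨d, hD, hr, hs'⟩
    · rw [hs'] at hs
      cases hs
      exact ⟨rfl, E, O, hR, hD⟩
    · rw [hs'] at hs
      have := ih (S.of_shapeT_eq (shapeT_setE ..).symm) (E.move hR (by omega))
        (O.move_right E.hole hR hd) (by rw [sizeT_congr (shapeT_setE ..)]; omega) hs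
      exact ⟨this.1.trans (shapeT_setE ..), this.2⟩
    · rw [hs'] at hs
      have hdr : ∀ r, getE t i (j + 1) = some r → d < r := fun r hR => by
        have hne : r ≠ d := fun he => by
          have := E.inj _ _ _ _ _ hR (he ▸ hD) (by omega) (by omega)
          omega
        have := hr r hR
        omega
      have := ih (S.of_shapeT_eq (shapeT_setE ..).symm) (E.move hD (by omega))
        (O.move_down E.hole hD hdr) (by rw [sizeT_congr (shapeT_setE ..)]; omega) hs
      exact ⟨this.1.trans (shapeT_setE ..), this.2⟩

theorem rowOf_eq_of_getE_eq_some {t : Tab} (hnd : t.flatten.Nodup) {p q v : ℕ}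
    (h : getE t p q = some v) : rowOf t v = p := by
  have hp := lt_length_of_getE_eq_some h
  have hq := lt_rowLen_of_getE_eq_some h
  rw [rowLen_of_lt hp] at hq
  rw [getE_eq_getElem hp hq, Option.some.injEq] at h
  have hvmem : v ∈ t[p] := h ▸ List.getElem_mem hq
  refine (List.findIdx_eq hp).2 ⟨by simpa using hvmem, fun j hj => ?_⟩
  have hdisj := List.pairwise_iff_getElem.1 (List.nodup_flatten.1 hnd).2 j p (hj.trans hp) hp hj
  simpa using fun hmem => hdisj hmem hvmem

namespace IsSYT

variable {t : Tab} (ht : IsSYT t)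
include ht

theorem isYoungShape : IsYoungShape t := ⟨ht.1, ht.2.1⟩

theorem perm : t.flatten.Perm (List.range' 1 (sizeT t)) := ht.2.2.2.2

theorem nodup : t.flatten.Nodup := ht.perm.nodup_iff.2 List.nodup_range'

theorem mem_range'_of_getE_eq_some {p q v : ℕ} (h : getE t p q = some v) :
    v ∈ List.range' 1 (sizeT t) :=
  ht.perm.subset (mem_flatten_of_getE_eq_some h)

theorem exists_getE_eq_some_of_le {v : ℕ} (h1 : 1 ≤ v) (hn : v ≤ sizeT t) :
    ∃ p q, getE t p q = some v :=
  exists_getE_eq_some_of_mem_flatten (ht.perm.mem_iff.2 (List.mem_range'_1.2 ⟨h1, by omega⟩))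

theorem eq_nil_of_sizeT_eq_zero (h : sizeT t = 0) : t = [] :=
  List.length_eq_zero_iff.1 (by have := ht.isYoungShape.length_le_sizeT; omega)

theorem sizeT_pos (hne : t ≠ []) : 0 < sizeT t :=
  Nat.pos_of_ne_zero fun h => hne (ht.eq_nil_of_sizeT_eq_zero h)

theorem getE_lt_right {p q v w : ℕ} (hv : getE t p q = some v) (hw : getE t p (q + 1) = some w) :
    v < w := by
  have hp := lt_length_of_getE_eq_some hv
  have hq := lt_rowLen_of_getE_eq_some hw
  rw [rowLen_of_lt hp] at hq
  rw [getE_eq_getElem hp (by omega)] at hv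
  rw [getE_eq_getElem hp hq] at hw
  cases hv; cases hw
  exact List.pairwise_iff_getElem.1 (ht.2.2.1 _ (List.getElem_mem hp)) q (q + 1) _ hq
    (Nat.lt_succ_self q)

theorem getE_lt_below {p q v w : ℕ} (hv : getE t p q = some v) (hw : getE t (p + 1) q = some w) :
    v < w := by
  have := ht.2.2.2.1 p q (lt_length_of_getE_eq_some hw) (lt_rowLen_of_getE_eq_some hw)
  rwa [getD_getD_eq_of_getE_eq_some hv, getD_getD_eq_of_getE_eq_some hw] at this

theorem getE_lt_of_lt_col {p q q' v w : ℕ} (hqq : q < q') (hv : getE t p q = some v)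
    (hw : getE t p q' = some w) : v < w := by
  induction q' generalizing w with
  | zero => omega
  | succ q' ih =>
    obtain ⟨x, hx⟩ := exists_getE_eq_some (t := t) (i := p) (j := q')
      (by have := lt_rowLen_of_getE_eq_some hw; omega)
    rcases (Nat.lt_succ_iff.1 hqq).eq_or_lt with rfl | hlt
    · exact ht.getE_lt_right hv hw
    · exact (ih hlt hx).trans (ht.getE_lt_right hx hw)

theorem getE_lt_of_lt_row {p p' q v w : ℕ} (hpp : p < p') (hv : getE t p q = some v)
    (hw : getE t p' q = some w) : v < w := by
  induction p' generalizing w with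
  | zero => omega
  | succ p' ih =>
    obtain ⟨x, hx⟩ := exists_getE_eq_some (t := t) (i := p') (j := q)
      (lt_of_lt_of_le (lt_rowLen_of_getE_eq_some hw) (ht.isYoungShape.rowLen_anti (by omega)))
    rcases (Nat.lt_succ_iff.1 hpp).eq_or_lt with rfl | hlt
    · exact ht.getE_lt_below hv hw
    · exact (ih hlt hx).trans (ht.getE_lt_below hx hw)

theorem getE_inj {p q p' q' v : ℕ} (hv : getE t p q = some v) (hv' : getE t p' q' = some v) :
    p = p' ∧ q = q' := by
  obtain rfl : p = p' :=
    (rowOf_eq_of_getE_eq_some ht.nodup hv).symm.trans (rowOf_eq_of_getE_eq_some ht.nodup hv')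
  have hp := lt_length_of_getE_eq_some hv
  have hq := lt_rowLen_of_getE_eq_some hv
  have hq' := lt_rowLen_of_getE_eq_some hv'
  rw [rowLen_of_lt hp] at hq hq'
  rw [getE_eq_getElem hp hq] at hv
  rw [getE_eq_getElem hp hq', ← hv, Option.some.injEq] at hv'
  have hrow := (List.nodup_flatten.1 ht.nodup).1 _ (List.getElem_mem hp)
  exact ⟨rfl, hrow.getElem_inj_iff.1 hv'.symm⟩

theorem getE_zero_zero (hne : t ≠ []) : getE t 0 0 = some 1 := by
  obtain ⟨p, q, hpq⟩ := ht.exists_getE_eq_some_of_le le_rfl (ht.sizeT_pos hne)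
  have h1 : ∀ {a b v}, getE t a b = some v → 1 ≤ v := fun h =>
    (List.mem_range'_1.1 (ht.mem_range'_of_getE_eq_some h)).1
  obtain rfl : q = 0 := by
    by_contra hq
    obtain ⟨x, hx⟩ := exists_getE_eq_some (t := t) (i := p) (j := 0)
      (by have := lt_rowLen_of_getE_eq_some hpq; omega)
    have := ht.getE_lt_of_lt_col (Nat.pos_of_ne_zero hq) hx hpq
    have := h1 hx
    omega
  obtain rfl : p = 0 := by
    by_contra hp
    obtain ⟨x, hx⟩ := exists_getE_eq_some (t := t) (i := 0) (j := 0)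
      (ht.isYoungShape.rowLen_pos_iff.2 (by have := lt_length_of_getE_eq_some hpq; omega))
    have := ht.getE_lt_of_lt_row (Nat.pos_of_ne_zero hp) hx hpq
    have := h1 hx
    omega
  exact hpq

theorem holeEntries (hne : t ≠ []) : HoleEntries (List.range' 2 (sizeT t - 1)) t 0 0 where
  hole := lt_rowLen_of_getE_eq_some (ht.getE_zero_zero hne)
  inj _ _ _ _ _ hv hv' _ _ := ht.getE_inj hv hv'
  one_le _ _ _ hv := (List.mem_range'_1.1 (ht.mem_range'_of_getE_eq_some hv)).1
  perm := ⟨1, ht.getE_zero_zero hne, by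
    have := ht.perm
    rwa [← Nat.sub_add_cancel (ht.sizeT_pos hne), List.range'_succ] at this⟩

theorem slideOrder : SlideOrder t 0 0 where
  row _ _ _ _ hv hw _ _ := ht.getE_lt_right hv hw
  col _ _ _ _ hv hw _ _ := ht.getE_lt_below hv hw
  nbr _ _ _ _ h := by omega

end IsSYT

def truncateRow (t : Tab) (i c : ℕ) : Tab := t.set i ((t.getD i []).take c)

theorem getE_truncateRow (t : Tab) (i c p q : ℕ) :
    getE (truncateRow t i c) p q = if p = i ∧ c ≤ q then none else getE t p q := by
  unfold truncateRow getE
  rcases eq_or_ne p i with rfl | hp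
  · rcases lt_or_ge p t.length with hi | hi
    · by_cases hq : c ≤ q <;> simp [hi, hq, List.getD_eq_getElem?_getD, List.getElem?_take]
    · simp [List.set_eq_of_length_le hi, List.getElem?_eq_none hi]
  · simp [hp, List.getElem?_set_ne (Ne.symm hp)]

theorem rowLen_truncateRow (t : Tab) (i c p : ℕ) :
    rowLen (truncateRow t i c) p = if p = i then min c (rowLen t i) else rowLen t p := by
  unfold truncateRow
  rcases eq_or_ne p i with rfl | hp
  · rcases lt_or_ge p t.length with hi | hi
    · simp [rowLen_eq_getD, hi, List.getD_eq_getElem?_getD]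
    · simp [List.set_eq_of_length_le hi, rowLen_of_le hi]
  · simp [rowLen_eq_getD, hp, List.getElem?_set_ne (Ne.symm hp)]

theorem flatten_truncateRow (t : Tab) {i c : ℕ} (h : rowLen t i = c + 1) :
    (truncateRow t i c).flatten = t.flatten.eraseIdx (sizeT (t.take i) + c) := by
  induction t generalizing i with
  | nil => simp at h
  | cons row t ih =>
    cases i with
    | zero =>
      simp only [rowLen_cons_zero] at h
      simp [truncateRow, sizeT, List.eraseIdx_append_of_lt_length (by omega : c < row.length),
        List.eraseIdx_eq_take_drop_succ, List.drop_of_length_le (by omega : row.length ≤ c + 1)]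
    | succ i =>
      have := ih (i := i) (by simpa using h)
      simp only [truncateRow] at this
      simp only [truncateRow, List.getD_cons_succ, List.set_cons_succ, List.flatten_cons, this,
        List.take_succ_cons, sizeT_cons, Nat.add_assoc]
      rw [List.eraseIdx_append_of_length_le (by omega), Nat.add_sub_cancel_left]

section FilterNotIsEmpty

variable {u : Tab} (hanti : ∀ p p', p ≤ p' → rowLen u p' ≤ rowLen u p)
include hanti

theorem filter_not_isEmpty_eq_nil_of_rowLen_zero_eq_zero (h : rowLen u 0 = 0) :
    u.filter (fun row => !row.isEmpty) = [] := by
  refine List.filter_eq_nil_iff.2 fun row hrow => ?_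
  obtain ⟨p, hp, rfl⟩ := List.mem_iff_getElem.1 hrow
  have := hanti 0 p (Nat.zero_le p)
  rw [rowLen_of_lt hp] at this
  simp [List.length_eq_zero_iff.1 (by omega : u[p].length = 0)]

/-- Row lengths are antitone, so the empty rows form a suffix and dropping them moves no cell. -/
theorem getE_filter_not_isEmpty (p q : ℕ) :
    getE (u.filter (fun row => !row.isEmpty)) p q = getE u p q := by
  induction u generalizing p with
  | nil => rfl
  | cons row u ih =>
    have hanti' : ∀ p p', p ≤ p' → rowLen u p' ≤ rowLen u p := fun p p' h =>
      hanti (p + 1) (p' + 1) (by omega)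
    rcases eq_or_ne row [] with rfl | hrow
    · rw [List.filter_cons_of_neg (by simp),
        filter_not_isEmpty_eq_nil_of_rowLen_zero_eq_zero hanti' (by simpa using hanti 0 1)]
      exact (getE_eq_none_iff.2 (by have := hanti 0 p (Nat.zero_le p); simp at this; omega)).symm
    · rw [List.filter_cons_of_pos (by simpa using hrow)]
      cases p with
      | zero => rfl
      | succ p => exact ih hanti' p

theorem rowLen_filter_not_isEmpty (p : ℕ) :
    rowLen (u.filter (fun row => !row.isEmpty)) p = rowLen u p := by
  have h := getE_filter_not_isEmpty hanti p
  have h1 : ¬rowLen u p < rowLen (u.filter (fun row => !row.isEmpty)) p := by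
    rw [← getE_isSome_iff, h, getE_isSome_iff]
    exact lt_irrefl _
  have h2 : ¬rowLen (u.filter (fun row => !row.isEmpty)) p < rowLen u p := by
    rw [← getE_isSome_iff, ← h, getE_isSome_iff]
    exact lt_irrefl _
  omega

end FilterNotIsEmpty

theorem getE_map_map (t : Tab) (f : ℕ → ℕ) (p q : ℕ) :
    getE (t.map (List.map f)) p q = (getE t p q).map f := by
  unfold getE
  rw [List.getElem?_map]
  cases t[p]? <;> simp

theorem rowLen_map_map (t : Tab) (f : ℕ → ℕ) (p : ℕ) :
    rowLen (t.map (List.map f)) p = rowLen t p := by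
  simp only [rowLen_eq_getD, List.getElem?_map]
  cases t[p]? <;> simp

theorem isSYT_of_getE {t : Tab} (S : IsYoungShape t)
    (hrow : ∀ p q v w, getE t p q = some v → getE t p (q + 1) = some w → v < w)
    (hcol : ∀ p q v w, getE t p q = some v → getE t (p + 1) q = some w → v < w)
    (hperm : t.flatten.Perm (List.range' 1 (sizeT t))) : IsSYT t := by
  refine ⟨S.ne_nil, S.antitone, fun row hrow' => ?_, fun i j _ hj => ?_, hperm⟩
  · obtain ⟨p, hp, rfl⟩ := List.mem_iff_getElem.1 hrow'
    rw [← List.isChain_iff_pairwise, List.isChain_iff_getElem]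
    intro q hq
    exact hrow p q _ _ (getE_eq_getElem hp (by omega)) (getE_eq_getElem hp hq)
  · obtain ⟨w, hw⟩ := exists_getE_eq_some (t := t) (i := i + 1) (j := j) hj
    obtain ⟨v, hv⟩ := exists_getE_eq_some (t := t) (i := i) (j := j)
      (lt_of_lt_of_le hj (S.rowLen_anti (Nat.le_succ i)))
    rw [getD_getD_eq_of_getE_eq_some hv, getD_getD_eq_of_getE_eq_some hw]
    exact hcol _ _ _ _ hv hw

theorem delta_eq_of_slide {t t' : Tab} {r c : ℕ} (hs : slide (sizeT t) t 0 0 = (t', r, c)) :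
    delta t = ((truncateRow t' r c).filter (fun row => !row.isEmpty)).map (List.map (· - 1)) := by
  simp only [delta, hs]
  rfl

section DeltaOfSlide

variable {t t' : Tab} {r c : ℕ} (ht : IsSYT t) (hne : t ≠ [])
  (hs : slide (sizeT t) t 0 0 = (t', r, c))
include ht hne hs

theorem slide_spec_of_isSYT :
    shapeT t' = shapeT t ∧ HoleEntries (List.range' 2 (sizeT t - 1)) t' r c ∧
      SlideOrder t' r c ∧ getE t' r (c + 1) = none ∧ getE t' (r + 1) c = none :=
  slide_spec (sizeT t) ht.isYoungShape (ht.holeEntries hne) ht.slideOrder (by omega) hs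

theorem rowLen_slide_fst : rowLen t r = c + 1 := by
  obtain ⟨hshape, E, -, hend, -⟩ := slide_spec_of_isSYT ht hne hs
  have := getE_eq_none_iff.1 hend
  have := E.hole
  rw [← rowLen_congr hshape]
  omega

theorem rowLen_succ_slide_fst_le : rowLen t (r + 1) ≤ c := by
  obtain ⟨hshape, -, -, -, hend⟩ := slide_spec_of_isSYT ht hne hs
  rw [← rowLen_congr hshape]
  exact getE_eq_none_iff.1 hend

theorem slide_fst_lt_length : r < t.length :=
  ht.isYoungShape.rowLen_pos_iff.1 (by rw [rowLen_slide_fst ht hne hs]; omega)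

theorem rowLen_truncateRow_slide (p : ℕ) :
    rowLen (truncateRow t' r c) p = if p = r then c else rowLen t p := by
  have hshape := (slide_spec_of_isSYT ht hne hs).1
  rw [rowLen_truncateRow, rowLen_congr hshape, rowLen_congr hshape, rowLen_slide_fst ht hne hs]
  split_ifs <;> omega

theorem rowLen_truncateRow_slide_anti :
    ∀ p p', p ≤ p' → rowLen (truncateRow t' r c) p' ≤ rowLen (truncateRow t' r c) p := by
  intro p p' hp
  have S := ht.isYoungShape
  have := rowLen_slide_fst ht hne hs
  have := rowLen_succ_slide_fst_le ht hne hs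
  rw [rowLen_truncateRow_slide ht hne hs, rowLen_truncateRow_slide ht hne hs]
  split_ifs with h h'
  · omega
  · have := S.rowLen_anti (show p ≤ r by omega); omega
  · have := S.rowLen_anti (show r + 1 ≤ p' by omega); omega
  · exact S.rowLen_anti hp

theorem rowLen_delta_of_slide (p : ℕ) : rowLen (delta t) p = if p = r then c else rowLen t p := by
  rw [delta_eq_of_slide hs, rowLen_map_map,
    rowLen_filter_not_isEmpty (rowLen_truncateRow_slide_anti ht hne hs),
    rowLen_truncateRow_slide ht hne hs]

theorem getE_delta_of_slide (p q : ℕ) :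
    getE (delta t) p q = if p = r ∧ c ≤ q then none else (getE t' p q).map (· - 1) := by
  rw [delta_eq_of_slide hs, getE_map_map,
    getE_filter_not_isEmpty (rowLen_truncateRow_slide_anti ht hne hs), getE_truncateRow]
  split_ifs <;> rfl

theorem exists_getE_slide_of_getE_delta {p q x : ℕ} (hx : getE (delta t) p q = some x) :
    ∃ v, getE t' p q = some v ∧ ¬(p = r ∧ q = c) ∧ x = v - 1 ∧ 1 ≤ v := by
  rw [getE_delta_of_slide ht hne hs] at hx
  split_ifs at hx with h
  obtain ⟨v, hv, rfl⟩ := Option.map_eq_some_iff.1 hx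
  exact ⟨v, hv, by omega, rfl, (slide_spec_of_isSYT ht hne hs).2.1.one_le _ _ _ hv⟩

theorem perm_flatten_delta_of_slide :
    (delta t).flatten.Perm (List.range' 1 (sizeT t - 1)) := by
  obtain ⟨hshape, E, -⟩ := slide_spec_of_isSYT ht hne hs
  obtain ⟨h, hh, hperm⟩ := E.perm
  have hrow : rowLen t' r = c + 1 := by rw [rowLen_congr hshape]; exact rowLen_slide_fst ht hne hs
  rw [getE_eq_getElem?_flatten t' (by omega)] at hh
  rw [delta_eq_of_slide hs, ← List.map_flatten, List.flatten_filter_not_isEmpty,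
    flatten_truncateRow t' hrow, ← List.map_sub_range' (by omega : 1 ≤ 2)]
  exact (perm_eraseIdx_of_perm_cons hh hperm).map _

theorem sizeT_delta_of_slide : sizeT (delta t) = sizeT t - 1 := by
  rw [sizeT_eq_length_flatten, (perm_flatten_delta_of_slide ht hne hs).length_eq,
    List.length_range']

theorem isYoungShape_delta_of_slide : IsYoungShape (delta t) := by
  refine IsYoungShape.of_rowLen_anti (fun row hrow => ?_) fun p p' hp => ?_
  · rw [delta_eq_of_slide hs] at hrow
    obtain ⟨row', hrow', rfl⟩ := List.mem_map.1 hrow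
    simpa using (List.mem_filter.1 hrow').2
  · rw [delta_eq_of_slide hs, rowLen_map_map, rowLen_map_map,
      rowLen_filter_not_isEmpty (rowLen_truncateRow_slide_anti ht hne hs),
      rowLen_filter_not_isEmpty (rowLen_truncateRow_slide_anti ht hne hs)]
    exact rowLen_truncateRow_slide_anti ht hne hs p p' hp

theorem isSYT_delta_of_slide : IsSYT (delta t) := by
  obtain ⟨-, -, O, -⟩ := slide_spec_of_isSYT ht hne hs
  refine isSYT_of_getE (isYoungShape_delta_of_slide ht hne hs) (fun p q v w hv hw => ?_)
    (fun p q v w hv hw => ?_) ?_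
  · obtain ⟨v', hv', hv1, rfl, hv2⟩ := exists_getE_slide_of_getE_delta ht hne hs hv
    obtain ⟨w', hw', hw1, rfl, -⟩ := exists_getE_slide_of_getE_delta ht hne hs hw
    have := O.row _ _ _ _ hv' hw' hv1 (by omega)
    omega
  · obtain ⟨v', hv', hv1, rfl, hv2⟩ := exists_getE_slide_of_getE_delta ht hne hs hv
    obtain ⟨w', hw', hw1, rfl, -⟩ := exists_getE_slide_of_getE_delta ht hne hs hw
    have := O.col _ _ _ _ hv' hw' hv1 (by omega)
    omega
  · rw [sizeT_delta_of_slide ht hne hs]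
    exact perm_flatten_delta_of_slide ht hne hs

theorem diagBox_eq_of_slide : diagBox t = c - r := by
  have hlen : (delta t).length ≤ t.length := by
    by_contra h
    have := (isYoungShape_delta_of_slide ht hne hs).rowLen_pos_iff.2 (show t.length < _ by omega)
    rw [rowLen_delta_of_slide ht hne hs, if_neg (by have := slide_fst_lt_length ht hne hs; omega),
      rowLen_of_le le_rfl] at this
    omega
  rw [diagBox, diagT_eq_sum le_rfl, diagT_eq_sum hlen, ← Finset.sum_sub_distrib,
    Finset.sum_eq_single_of_mem r (Finset.mem_range.2 (slide_fst_lt_length ht hne hs)),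
    rowLen_delta_of_slide ht hne hs, if_pos rfl, rowLen_slide_fst ht hne hs,
    Finset.sum_range_succ, add_sub_cancel_left]
  intro i _ hi
  rw [rowLen_delta_of_slide ht hne hs, if_neg hi, sub_self]

theorem length_delta_of_slide (hc : c ≠ 0) : (delta t).length = t.length :=
  (isYoungShape_delta_of_slide ht hne hs).length_eq ht.isYoungShape fun p => by
    rw [rowLen_delta_of_slide ht hne hs]
    split_ifs with h
    · subst h; rw [rowLen_slide_fst ht hne hs]; omega
    · rfl

end DeltaOfSlide

theorem slide_col_zero (fuel : ℕ) {t t' : Tab} {i i' : ℕ} (hole : 0 < rowLen t i)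
    (hs : slide fuel t i 0 = (t', i', 0)) :
    (∀ p q, (0 < q ∨ p < i) → getE t' p q = getE t p q) ∧
      ∀ p, i ≤ p → p < i' → getE t' p 0 = getE t (p + 1) 0 := by
  induction fuel generalizing t i with
  | zero =>
    cases hs
    exact ⟨fun _ _ _ => rfl, fun _ _ _ => by omega⟩
  | succ fuel ih =>
    rcases slide_succ_cases fuel t i 0 with ⟨-, -, hs'⟩ | ⟨r, -, -, hs'⟩ | ⟨d, hd, -, hs'⟩ <;>
      rw [hs'] at hs
    · cases hs
      exact ⟨fun _ _ _ => rfl, fun _ _ _ => by omega⟩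
    · have := le_slide_snd_snd fuel (setE t i 0 r) i 1
      rw [hs] at this
      exact absurd this (by simp)
    · obtain ⟨h1, h2⟩ := ih (by rw [rowLen_setE]; exact lt_rowLen_of_getE_eq_some hd) hs
      refine ⟨fun p q hpq => ?_, fun p hp hp' => ?_⟩
      · rw [h1 p q (by omega), getE_setE_of_ne (by omega)]
      · rcases hp.eq_or_lt with rfl | hlt
        · rw [h1 i 0 (by omega), getE_setE_self hole, hd]
        · rw [h2 p hlt hp', getE_setE_of_ne (by omega)]

def IsAscent (t : Tab) (i : ℕ) : Prop := i = sizeT t ∨ rowOf t (i + 1) ≤ rowOf t i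

theorem firstAscent_eq_some_iff {t : Tab} {a : ℕ} :
    firstAscent t = some a ↔
      1 ≤ a ∧ a ≤ sizeT t ∧ IsAscent t a ∧ ∀ b, 1 ≤ b → b < a → ¬IsAscent t b := by
  have hrange : (List.range (sizeT t)).map (· + 1) = List.range' 1 (sizeT t) := by
    rw [List.range'_eq_map_range]
    simp only [Nat.add_comm]
  simp only [firstAscent, hrange, List.find?_range'_eq_some, List.mem_range'_1, IsAscent,
    decide_eq_true_eq, Bool.not_eq_true', decide_eq_false_iff_not]
  constructor
  · rintro ⟨h, ⟨h1, h2⟩, hmin⟩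
    exact ⟨h1, by omega, h, hmin⟩
  · rintro ⟨h1, h2, h, hmin⟩
    exact ⟨h, ⟨h1, by omega⟩, hmin⟩

theorem exists_firstAscent_eq_some {t : Tab} (h : 0 < sizeT t) : ∃ a, firstAscent t = some a := by
  refine Option.ne_none_iff_exists'.1 fun hnone => ?_
  simp only [firstAscent, List.find?_eq_none, List.mem_map, List.mem_range] at hnone
  exact hnone (sizeT t) ⟨sizeT t - 1, by omega, by omega⟩ (by simp)

theorem IsSYT.getE_zero_of_lt_firstAscent {t : Tab} (ht : IsSYT t) {a : ℕ} (ha : a ≤ sizeT t)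
    (hmin : ∀ b, 1 ≤ b → b < a → ¬IsAscent t b) : ∀ i < a, getE t i 0 = some (i + 1) := by
  intro i hi
  induction i with
  | zero => exact ht.getE_zero_zero fun h => by subst h; simp [sizeT] at ha; omega
  | succ i ih =>
    have hprev := ih (by omega)
    have hrow : i < rowOf t (i + 1 + 1) := by
      have := hmin (i + 1) (by omega) hi
      simp only [IsAscent, not_or, not_le] at this
      rw [rowOf_eq_of_getE_eq_some ht.nodup hprev] at this
      exact this.2
    obtain ⟨ρ, κ, hcell⟩ := ht.exists_getE_eq_some_of_le (v := i + 1 + 1) (by omega) (by omega)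
    rw [rowOf_eq_of_getE_eq_some ht.nodup hcell] at hrow
    obtain ⟨x, hx⟩ := exists_getE_eq_some (t := t) (i := ρ) (j := 0)
      (by have := lt_rowLen_of_getE_eq_some hcell; omega)
    have hx1 := ht.getE_lt_of_lt_row hrow hprev hx
    obtain rfl : κ = 0 := by
      by_contra hκ
      have := ht.getE_lt_of_lt_col (Nat.pos_of_ne_zero hκ) hx hcell
      omega
    obtain rfl : ρ = i + 1 := by
      by_contra hρ
      obtain ⟨y, hy⟩ := exists_getE_eq_some (t := t) (i := ρ - 1) (j := 0)
        (ht.isYoungShape.rowLen_pos_iff.2 (by have := lt_length_of_getE_eq_some hcell; omega))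
      have := ht.getE_lt_of_lt_row (show i < ρ - 1 by omega) hprev hy
      have := ht.getE_lt_of_lt_row (show ρ - 1 < ρ by omega) hy hcell
      omega
    exact hcell

section SlideColumnZero

variable {t t' : Tab} {r : ℕ} (ht : IsSYT t) (hne : t ≠ [])
  (hs : slide (sizeT t) t 0 0 = (t', r, 0))
include ht hne hs

theorem slide_fst_add_one_eq_length_of_zero : r + 1 = t.length := by
  have := rowLen_succ_slide_fst_le ht hne hs
  have := slide_fst_lt_length ht hne hs
  have := ht.isYoungShape.rowLen_pos_iff (p := r + 1)
  omega

theorem getE_delta_zero_of_slide_zero {a : ℕ} (ha : firstAscent t = some a) :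
    ∀ i, i + 1 < a → getE (delta t) i 0 = some (i + 1) := by
  obtain ⟨-, han, -, hmin⟩ := firstAscent_eq_some_iff.1 ha
  have hcol := ht.getE_zero_of_lt_firstAscent han hmin
  have hlen := slide_fst_add_one_eq_length_of_zero ht hne hs
  intro i hi
  have hia : i + 1 < t.length := lt_length_of_getE_eq_some (hcol (i + 1) hi)
  rw [getE_delta_of_slide ht hne hs, if_neg (by omega),
    (slide_col_zero _ (ht.isYoungShape.rowLen_pos_iff.2 (by omega)) hs).2 i (Nat.zero_le i)
      (by omega), hcol (i + 1) hi]
  rfl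

/-- If `a + 1` sat just right of `a = t(a-1, 0)`, the slide would have moved right at row
`a - 1` instead of continuing down the first column. -/
theorem exists_getE_succ_firstAscent_of_slide_zero {a : ℕ} (ha : firstAscent t = some a)
    (han : a < sizeT t) : ∃ ρ κ, getE t ρ κ = some (a + 1) ∧ 0 < κ ∧ ρ + 2 ≤ a := by
  obtain ⟨ha1, -, hasc, hmin⟩ := firstAscent_eq_some_iff.1 ha
  have hcol := ht.getE_zero_of_lt_firstAscent han.le hmin
  have hlen := slide_fst_add_one_eq_length_of_zero ht hne hs
  have hcola : getE t (a - 1) 0 = some a := by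
    have := hcol (a - 1) (by omega)
    rwa [Nat.sub_add_cancel ha1] at this
  obtain ⟨ρ, κ, hcell⟩ := ht.exists_getE_eq_some_of_le (v := a + 1) (by omega) han
  have hρ : ρ ≤ a - 1 := by
    have := hasc.resolve_left (by omega)
    rwa [rowOf_eq_of_getE_eq_some ht.nodup hcell, rowOf_eq_of_getE_eq_some ht.nodup hcola] at this
  have hκ : 0 < κ := Nat.pos_of_ne_zero fun hκ => by
    rw [hκ, hcol ρ (by omega), Option.some.injEq] at hcell
    omega
  refine ⟨ρ, κ, hcell, hκ, Nat.not_lt.1 fun hρ' => ?_⟩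
  obtain rfl : ρ = a - 1 := by omega
  obtain ⟨y, hy⟩ := exists_getE_eq_some (t := t) (i := a - 1) (j := 1)
    (by have := lt_rowLen_of_getE_eq_some hcell; omega)
  have hy1 := ht.getE_lt_of_lt_col zero_lt_one hcola hy
  have hy2 : y ≤ a + 1 := by
    rcases Nat.lt_or_ge 1 κ with hκ1 | hκ1
    · exact (ht.getE_lt_of_lt_col hκ1 hy hcell).le
    · obtain rfl : κ = 1 := by omega
      rw [hy, Option.some.injEq] at hcell
      omega
  have har : a - 1 < r := by
    have hne' : a - 1 ≠ r := fun h => by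
      have := lt_rowLen_of_getE_eq_some hy
      rw [h, rowLen_slide_fst ht hne hs] at this
      omega
    have := lt_length_of_getE_eq_some hy
    omega
  obtain ⟨d, hd⟩ := exists_getE_eq_some (t := t) (i := a) (j := 0)
    (ht.isYoungShape.rowLen_pos_iff.2 (by omega))
  have hd1 := ht.getE_lt_of_lt_row (show a - 1 < a by omega) hcola hd
  obtain ⟨hcols, hcol0⟩ := slide_col_zero _ (ht.isYoungShape.rowLen_pos_iff.2 (by omega)) hs
  have hd' : getE t' (a - 1) 0 = some d := by
    rw [hcol0 (a - 1) (Nat.zero_le _) har, Nat.sub_add_cancel ha1, hd]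
  have hy' : getE t' (a - 1) 1 = some y := by rw [hcols _ _ (Or.inl one_pos), hy]
  have := (slide_spec_of_isSYT ht hne hs).2.2.1.row _ _ _ _ hd' hy' (by omega) (by omega)
  omega

theorem isAscent_delta_pred_of_slide_zero {a : ℕ} (ha : firstAscent t = some a) (h2 : 2 ≤ a) :
    IsAscent (delta t) (a - 1) := by
  obtain ⟨-, han, -, hmin⟩ := firstAscent_eq_some_iff.1 ha
  have hlen := slide_fst_add_one_eq_length_of_zero ht hne hs
  have := lt_length_of_getE_eq_some (ht.getE_zero_of_lt_firstAscent han hmin (a - 1) (by omega))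
  rcases han.lt_or_eq with han | rfl
  · obtain ⟨ρ, κ, hcell, hκ, hρ⟩ := exists_getE_succ_firstAscent_of_slide_zero ht hne hs ha han
    have hcell' : getE (delta t) ρ κ = some a := by
      rw [getE_delta_of_slide ht hne hs, if_neg (by omega),
        (slide_col_zero _ (ht.isYoungShape.rowLen_pos_iff.2 (by omega)) hs).1 _ _ (Or.inl hκ),
        hcell]
      rfl
    have hpred := getE_delta_zero_of_slide_zero ht hne hs ha (a - 2) (by omega)
    have hnd := (isSYT_delta_of_slide ht hne hs).nodup
    right
    rw [Nat.sub_add_cancel (by omega), rowOf_eq_of_getE_eq_some hnd hcell',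
      show a - 1 = a - 2 + 1 by omega, rowOf_eq_of_getE_eq_some hnd hpred]
    omega
  · exact Or.inl (by rw [sizeT_delta_of_slide ht hne hs])

theorem not_isAscent_delta_of_slide_zero {a : ℕ} (ha : firstAscent t = some a) {b : ℕ}
    (hb : 1 ≤ b) (hba : b + 1 < a) : ¬IsAscent (delta t) b := by
  obtain ⟨-, han, -⟩ := firstAscent_eq_some_iff.1 ha
  have hnd := (isSYT_delta_of_slide ht hne hs).nodup
  have h1 := getE_delta_zero_of_slide_zero ht hne hs ha b hba
  have h2 := getE_delta_zero_of_slide_zero ht hne hs ha (b - 1) (by omega)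
  rw [Nat.sub_add_cancel hb] at h2
  rw [IsAscent, sizeT_delta_of_slide ht hne hs, rowOf_eq_of_getE_eq_some hnd h1,
    rowOf_eq_of_getE_eq_some hnd h2]
  omega

end SlideColumnZero

theorem isDes_delta_of_slide_zero {t t' : Tab} {r : ℕ} (ht : IsSYT t) (hnd : ¬IsDes t)
    (hs : slide (sizeT t) t 0 0 = (t', r, 0)) : IsDes (delta t) := by
  have hne : t ≠ [] := fun h => hnd (Or.inl h)
  have hn := sizeT_delta_of_slide ht hne hs
  rcases (show sizeT t = 1 ∨ 2 ≤ sizeT t by have := ht.sizeT_pos hne; omega) with h1 | h2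
  · exact Or.inl ((isSYT_delta_of_slide ht hne hs).eq_nil_of_sizeT_eq_zero (by omega))
  obtain ⟨a, ha⟩ := exists_firstAscent_eq_some (ht.sizeT_pos hne)
  obtain ⟨ha1, han, -⟩ := firstAscent_eq_some_iff.1 ha
  have hodd : ¬Even a := fun hev => hnd (Or.inr ⟨a, ha, hev⟩)
  have h2a : 2 ≤ a := by
    rcases han.lt_or_eq with han | rfl
    · obtain ⟨ρ, -, -, -, hρ⟩ := exists_getE_succ_firstAscent_of_slide_zero ht hne hs ha han
      omega
    · exact h2
  refine Or.inr ⟨a - 1, firstAscent_eq_some_iff.2 ⟨by omega, by omega,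
    isAscent_delta_pred_of_slide_zero ht hne hs ha h2a, fun b hb hba =>
      not_isAscent_delta_of_slide_zero ht hne hs ha hb (by omega)⟩, ?_⟩
  rw [Nat.not_even_iff_odd] at hodd
  exact Nat.Odd.sub_odd hodd odd_one

theorem isSYT_delta {t : Tab} (ht : IsSYT t) : IsSYT (delta t) := by
  rcases eq_or_ne t [] with rfl | hne
  · exact ht
  rcases hs : slide (sizeT t) t 0 0 with ⟨t', r, c⟩
  exact isSYT_delta_of_slide ht hne hs

theorem IsSYT.sizeT_delta {t : Tab} (ht : IsSYT t) (hne : t ≠ []) :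
    sizeT (delta t) + 1 = sizeT t := by
  rcases hs : slide (sizeT t) t 0 0 with ⟨t', r, c⟩
  rw [sizeT_delta_of_slide ht hne hs]
  have := ht.sizeT_pos hne
  omega

theorem IsSYT.isDes_iterate_delta {t : Tab} (ht : IsSYT t) : IsDes (delta^[sizeT t] t) := by
  induction hn : sizeT t generalizing t with
  | zero => exact Or.inl (ht.eq_nil_of_sizeT_eq_zero hn)
  | succ n ih =>
    have hne : t ≠ [] := by rintro rfl; simp [sizeT] at hn
    rw [Function.iterate_succ_apply]
    exact ih (isSYT_delta ht) (by have := ht.sizeT_delta hne; omega)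

theorem typeT_eq_zero_of_isDes {t : Tab} (h : IsDes t) : typeT t = 0 :=
  Nat.eq_zero_of_le_zero (Nat.sInf_le (show 0 ∈ {j | IsDes (delta^[j] t)} from h))

theorem IsSYT.typeT_pos_iff {t : Tab} (ht : IsSYT t) : 0 < typeT t ↔ ¬IsDes t := by
  refine ⟨fun h hd => by simp [typeT_eq_zero_of_isDes hd] at h, fun h => Nat.pos_of_ne_zero ?_⟩
  intro h0
  rcases Nat.sInf_eq_zero.1 h0 with h0 | hempty
  · exact h h0
  · exact hempty.subset ht.isDes_iterate_delta

theorem typeT_delta_add_one {t : Tab} (h : 0 < typeT t) : typeT (delta t) + 1 = typeT t := by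
  have := Nat.sInf_add (p := fun j => IsDes (delta^[j] t)) (n := 1) h
  unfold typeT
  simpa only [Function.iterate_succ_apply] using this

theorem IsSYT.typeT_add_length_le {t : Tab} (ht : IsSYT t) (hnd : ¬IsDes t) :
    typeT t + t.length ≤ sizeT t + 1 := by
  induction hn : sizeT t generalizing t with
  | zero => exact absurd (Or.inl (ht.eq_nil_of_sizeT_eq_zero hn)) hnd
  | succ n ih =>
    have hne : t ≠ [] := fun h => hnd (Or.inl h)
    have hsize := ht.sizeT_delta hne
    have htype := typeT_delta_add_one (ht.typeT_pos_iff.2 hnd)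
    by_cases hdd : IsDes (delta t)
    · have := ht.isYoungShape.length_le_sizeT
      rw [typeT_eq_zero_of_isDes hdd] at htype
      omega
    · rcases hs : slide (sizeT t) t 0 0 with ⟨t', r, c⟩
      have hc : c ≠ 0 := by
        rintro rfl
        exact hdd (isDes_delta_of_slide_zero ht hnd hs)
      have := length_delta_of_slide ht hne hs hc
      have := ih (isSYT_delta ht) hdd (by omega)
      omega

theorem v_zero (t : Tab) : v 0 t = 1 := by
  unfold v
  cases sizeT t <;> rfl

theorem v_succ_of_typeT_lt {t : Tab} {k : ℕ} (h : typeT t < k + 1) : v (k + 1) t = 0 := by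
  unfold v
  cases sizeT t
  · rfl
  · rw [vAux, if_pos h]

theorem v_succ {t : Tab} {k : ℕ} (hn : sizeT (delta t) + 1 = sizeT t) (h : k + 1 ≤ typeT t) :
    v (k + 1) t =
      v (k + 1) (delta t) + ((sizeT t : ℤ) + 1 - (k + 1) + diagBox t) * v k (delta t) := by
  unfold v
  rw [← hn, vAux, if_neg (by omega), hn]

theorem IsSYT.v_pos {t : Tab} (ht : IsSYT t) {k : ℕ} (hk : k ≤ typeT t) : 0 < v k t := by
  induction hn : sizeT t generalizing t k with
  | zero =>
    obtain rfl := ht.eq_nil_of_sizeT_eq_zero hn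
    obtain rfl : k = 0 := by have := typeT_eq_zero_of_isDes (t := []) (Or.inl rfl); omega
    simp [v_zero]
  | succ n ih =>
    cases k with
    | zero => simp [v_zero]
    | succ k =>
      have hnd : ¬IsDes t := ht.typeT_pos_iff.1 (by omega)
      have hne : t ≠ [] := fun h => hnd (Or.inl h)
      have hsize := ht.sizeT_delta hne
      have htype := typeT_delta_add_one (ht.typeT_pos_iff.2 hnd)
      rcases hs : slide (sizeT t) t 0 0 with ⟨t', r, c⟩
      have hcoef : 0 < (sizeT t : ℤ) + 1 - (k + 1) + diagBox t := by
        have := ht.typeT_add_length_le hnd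
        have := slide_fst_lt_length ht hne hs
        rw [diagBox_eq_of_slide ht hne hs]
        omega
      have hB : 0 < v k (delta t) := ih (isSYT_delta ht) (by omega) (by omega)
      have hA : 0 ≤ v (k + 1) (delta t) := by
        rcases Nat.lt_or_ge (typeT (delta t)) (k + 1) with hlt | hge
        · rw [v_succ_of_typeT_lt hlt]
        · exact (ih (isSYT_delta ht) hge (by omega)).le
      rw [v_succ hsize hk]
      exact add_pos_of_nonneg_of_pos hA (mul_pos hcoef hB)

end RSW

open RSW

/-- For every standard tableau of type at least `k ≥ 1`, the eigenvalue
`v_k(t)` is a positive integer. -/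
theorem v_pos (t : Tab) (ht : IsSYT t) (k : ℕ)
    (htype : k ≤ typeT t) : 0 < v k t :=
  ht.v_pos htype
end
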